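/- Let 𝒰 be a universe and (X, L, s) a 𝒰-counting system. Then the relation ≤_L is transitive, and moreover x ≤_s y and y ≤_L z together imply x ≤_L z, for all x, y, z ∈ X. -/

import Mathlib

/-
If `J ∈ dom L` and `A` is a `𝒰`-small set with `A ⊆ J̄` and `A ∪ J` successor-closed, then
`A ∪ J ∈ dom L` has the same closure as `J`, so (C2) gives `L(A ∪ J) = L(J)` and every element
of `A` lies `≤_L L(J)`. For transitivity take `A = I` with `L(I) ∈ J`: a closed set containing
`L(I)` contains `I`. For `≤_s` take `A = {x}` with `s(x) ∈ J`: closed sets are closed under `s⁻¹`;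
then iterate. That `I ∪ J` is small comes from a tagged disjoint union `{∅, {∅}} × (B ∪ C)` in `𝒰`.
-/

namespace Paper

/-- The union `⋃_{i ∈ I} f(i)` of the values of `f` on elements of `I`. -/
noncomputable def unionImage (f : ZFSet → ZFSet) (I : ZFSet) : ZFSet :=
  ZFSet.sUnion (@ZFSet.image f (Classical.allZFSetDefinable _) I)

/-- A universe: a transitive set closed under pairing and under unions of
`𝒰`-indexed families of elements of `𝒰`. -/
def IsUniverse (U : ZFSet) : Prop :=
  U.IsTransitive ∧
  (∀ x ∈ U, ∀ y ∈ U, ({x, y} : ZFSet) ∈ U) ∧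
  (∀ I ∈ U, ∀ f : ZFSet → ZFSet, (∀ i ∈ I, f i ∈ U) → unionImage f I ∈ U)

variable {X : Type*}

/-- `A ∈ P_𝒰(X)`: the subset `A` of the type `X` is in bijection with some element of `𝒰`. -/
def SmallSet (U : ZFSet) (A : Set X) : Prop :=
  ∃ B : ZFSet, B ∈ U ∧ Nonempty (A ≃ B.toSet)

/-- `x < y` in the sense `x ≤ y ∧ x ≠ y`, for an arbitrary relation `le`. -/
def ltR (le : X → X → Prop) (x y : X) : Prop := le x y ∧ x ≠ y

/-- The lower complement `S^↧ = {x | ∀ y ∈ S, x < y}`. -/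
def lowerComp (le : X → X → Prop) (S : Set X) : Set X := {x | ∀ y ∈ S, ltR le x y}

/-- The upper complement `S^↑ = {x | ∀ y ∈ S, y < x}`. -/
def upperComp (le : X → X → Prop) (S : Set X) : Set X := {x | ∀ y ∈ S, ltR le y x}

/-- `b` is the incremented join `⋁⁺S`, i.e. the minimum of `S^↑`. -/
def IsIncJoin (le : X → X → Prop) (S : Set X) (b : X) : Prop :=
  b ∈ upperComp le S ∧ ∀ c ∈ upperComp le S, le b c

/-- `b = x⁺`, i.e. `b = ⋁⁺{x}`. -/
def IsSuccOf (le : X → X → Prop) (x b : X) : Prop := IsIncJoin le {x} b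

/-- `b` is the join (least upper bound) of `S`. -/
def IsJoin (le : X → X → Prop) (S : Set X) (b : X) : Prop :=
  (∀ y ∈ S, le y b) ∧ ∀ c, (∀ y ∈ S, le y c) → le b c

/-- An ordinal system relative to the universe `U`: a partial order satisfying
(O1) lower complements of nonempty subsets lie in `P_𝒰(X)`, and
(O2) every member of `P_𝒰(X)` has an incremented join. -/
def IsOrdinalSystem (U : ZFSet) (le : X → X → Prop) : Prop :=
  IsPartialOrder X le ∧
  (∀ S : Set X, S.Nonempty → SmallSet U (lowerComp le S)) ∧
  (∀ S : Set X, SmallSet U S → ∃ b, IsIncJoin le S b)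

/-- `I` is successor-closed: `s(I) ⊆ I`. -/
def SuccClosed (s : X → X) (I : Set X) : Prop := ∀ x ∈ I, s x ∈ I

/-- The domain of the limit function of a `𝒰`-counting system (axiom (C1)):
the successor-closed members of `P_𝒰(X)`. -/
def LDom (U : ZFSet) (s : X → X) : Set (Set X) :=
  {I | SuccClosed s I ∧ SmallSet U I}

/-- A subset `J` is closed when `s⁻¹(J) ⊆ J` and `A ⊆ J` whenever `L(A) ∈ J`. -/
def IsClosedSub (U : ZFSet) (s : X → X) (L : ∀ I ∈ LDom U s, X) (J : Set X) : Prop :=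
  (∀ x : X, s x ∈ J → x ∈ J) ∧
  (∀ A (h : A ∈ LDom U s), L A h ∈ J → A ⊆ J)

/-- The closure `Ī` of `I` in the topology of closed subsets: the intersection
of all closed subsets containing `I`. -/
def cl (U : ZFSet) (s : X → X) (L : ∀ I ∈ LDom U s, X) (I : Set X) : Set X :=
  {x | ∀ J : Set X, IsClosedSub U s L J → I ⊆ J → x ∈ J}

/-- `x ≤_s y`: `s^m(x) = y` for some `m ∈ ℕ`. -/
def leS (s : X → X) (x y : X) : Prop := ∃ m : ℕ, s^[m] x = y

/-- `x ≤_L y`: `x ∈ I` and `L(I) = y` for some `I ∈ dom L`. -/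
def leL (U : ZFSet) (s : X → X) (L : ∀ I ∈ LDom U s, X) (x y : X) : Prop :=
  ∃ I, ∃ h : I ∈ LDom U s, x ∈ I ∧ L I h = y

/-- The specialization preorder: `x ≤ y` iff `x ∈ cl {y}`. -/
def leSpec (U : ZFSet) (s : X → X) (L : ∀ I ∈ LDom U s, X) (x y : X) : Prop :=
  x ∈ cl U s L {y}

/-- Axiom (C2): the limit function only depends on the closure of its argument. -/
def C2 (U : ZFSet) (s : X → X) (L : ∀ I ∈ LDom U s, X) : Prop :=
  ∀ I J (hI : I ∈ LDom U s) (hJ : J ∈ LDom U s),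
    cl U s L I = cl U s L J → L I hI = L J hJ

/-- Axiom (C3): `s⁻¹{L(I)} = ∅` and `s(L(I)) ∉ I` for all `I ∈ dom L`. -/
def C3 (U : ZFSet) (s : X → X) (L : ∀ I ∈ LDom U s, X) : Prop :=
  ∀ I (h : I ∈ LDom U s), (∀ x : X, s x ≠ L I h) ∧ s (L I h) ∉ I

/-- Axiom (C4): `s` is injective, and `L(I) = L(J)` implies `Ī = J̄`. -/
def C4 (U : ZFSet) (s : X → X) (L : ∀ I ∈ LDom U s, X) : Prop :=
  Function.Injective s ∧
  ∀ I J (hI : I ∈ LDom U s) (hJ : J ∈ LDom U s),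
    L I hI = L J hJ → cl U s L I = cl U s L J

/-- Axiom (C5): the induction axiom. -/
def C5 (U : ZFSet) (s : X → X) (L : ∀ I ∈ LDom U s, X) : Prop :=
  ∀ J : Set X, SuccClosed s J →
    (∀ I (h : I ∈ LDom U s), I ⊆ J → L I h ∈ J) → J = Set.univ

section

variable {U : ZFSet}

lemma mem_unionImage {f : ZFSet → ZFSet} {I z : ZFSet} :
    z ∈ unionImage f I ↔ ∃ i ∈ I, z ∈ f i := by
  simp [unionImage, ZFSet.mem_sUnion, ZFSet.mem_image]

namespace IsUniverse

lemma mem_of_mem (hU : IsUniverse U) {x y : ZFSet} (hx : x ∈ U) (hy : y ∈ x) : y ∈ U :=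
  hU.1 x hx hy

lemma empty_mem (hU : IsUniverse U) {x : ZFSet} (hx : x ∈ U) : (∅ : ZFSet) ∈ U := by
  obtain ⟨y, hyU, hUy⟩ := ZFSet.regularity U fun h => ZFSet.notMem_empty x (h ▸ hx)
  rcases ZFSet.eq_empty_or_nonempty y with rfl | ⟨z, hz⟩
  · exact hyU
  · have : z ∈ U ∩ y := ZFSet.mem_inter.2 ⟨hU.mem_of_mem hyU hz, hz⟩
    exact absurd (hUy ▸ this) (ZFSet.notMem_empty z)

lemma singleton_mem (hU : IsUniverse U) {x : ZFSet} (hx : x ∈ U) : ({x} : ZFSet) ∈ U := by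
  simpa using hU.2.1 x hx x hx

lemma pair_mem (hU : IsUniverse U) {x y : ZFSet} (hx : x ∈ U) (hy : y ∈ U) :
    ZFSet.pair x y ∈ U :=
  hU.2.1 _ (hU.singleton_mem hx) _ (hU.2.1 x hx y hy)

lemma union_mem (hU : IsUniverse U) {x y : ZFSet} (hx : x ∈ U) (hy : y ∈ U) : x ∪ y ∈ U := by
  have hxy : x ∪ y = unionImage id {x, y} := by
    ext z; simp [mem_unionImage]
  rw [hxy]
  refine hU.2.2 _ (hU.2.1 x hx y hy) id ?_
  simp only [ZFSet.mem_pair]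
  rintro _ (rfl | rfl) <;> assumption

lemma prod_mem (hU : IsUniverse U) {x y : ZFSet} (hx : x ∈ U) (hy : y ∈ U) :
    x.prod y ∈ U := by
  have hprod : x.prod y = unionImage (fun a => unionImage (fun b => {a.pair b}) y) x := by
    ext z; simp [ZFSet.mem_prod, mem_unionImage]
  rw [hprod]
  exact hU.2.2 x hx _ fun a ha =>
    hU.2.2 y hy _ fun b hb =>
      hU.singleton_mem (hU.pair_mem (hU.mem_of_mem hx ha) (hU.mem_of_mem hy hb))

lemma sep_mem (hU : IsUniverse U) {x : ZFSet} (hx : x ∈ U) (p : ZFSet → Prop) :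
    x.sep p ∈ U := by
  classical
  have hsep : x.sep p = unionImage (fun y => if p y then {y} else ∅) x := by
    ext z
    simp only [ZFSet.mem_sep, mem_unionImage]
    constructor
    · rintro ⟨hz, hpz⟩
      exact ⟨z, hz, by simp [hpz]⟩
    · rintro ⟨y, hy, hzy⟩
      split_ifs at hzy with hpy
      · exact ZFSet.mem_singleton.1 hzy ▸ ⟨hy, hpy⟩
      · exact absurd hzy (ZFSet.notMem_empty z)
  rw [hsep]
  refine hU.2.2 x hx _ fun y hy => ?_
  split_ifs
  · exact hU.singleton_mem (hU.mem_of_mem hx hy)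
  · exact hU.empty_mem hx

end IsUniverse

lemma smallSet_of_injOn (hU : IsUniverse U) {A : Set X} {f : X → ZFSet} {B : ZFSet}
    (hB : B ∈ U) (hf : Set.MapsTo f A B.toSet) (hinj : Set.InjOn f A) : SmallSet U A := by
  refine ⟨B.sep (· ∈ f '' A), hU.sep_mem hB _,
    ⟨(Equiv.Set.imageOfInjOn f A hinj).trans (Equiv.setCongr ?_)⟩⟩
  ext z
  change z ∈ f '' A ↔ z ∈ B.sep _
  rw [ZFSet.mem_sep]
  exact ⟨fun hz => ⟨hf.image_subset hz, hz⟩, And.right⟩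

lemma SmallSet.exists_injOn {A : Set X} (hA : SmallSet U A) :
    ∃ f : X → ZFSet, ∃ B ∈ U, Set.MapsTo f A B.toSet ∧ Set.InjOn f A := by
  classical
  obtain ⟨B, hB, ⟨e⟩⟩ := hA
  refine ⟨fun a => if h : a ∈ A then e ⟨a, h⟩ else ∅, B, hB,
    fun a ha => ?_, fun a ha a' ha' h => ?_⟩
  · simp [ha]
  · simp only [ha, ha', dite_true] at h
    exact congrArg Subtype.val (e.injective (Subtype.ext h))

lemma SmallSet.union (hU : IsUniverse U) {A A' : Set X} (hA : SmallSet U A)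
    (hA' : SmallSet U A') : SmallSet U (A ∪ A') := by
  classical
  obtain ⟨f, B, hB, hfB, hf⟩ := hA.exists_injOn
  obtain ⟨f', B', hB', hfB', hf'⟩ := hA'.exists_injOn
  have h0 : (∅ : ZFSet) ∈ U := hU.empty_mem hB
  refine smallSet_of_injOn hU
    (f := fun a => if a ∈ A then ZFSet.pair ∅ (f a) else ZFSet.pair {∅} (f' a))
    (hU.prod_mem (hU.2.1 _ h0 _ (hU.singleton_mem h0)) (hU.union_mem hB hB')) ?_ ?_
  · intro a ha
    change (if a ∈ A then _ else _) ∈ ZFSet.prod _ _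
    split_ifs with haA
    · exact ZFSet.pair_mem_prod.2 ⟨by simp, ZFSet.mem_union.2 (Or.inl (hfB haA))⟩
    · exact ZFSet.pair_mem_prod.2
        ⟨by simp, ZFSet.mem_union.2 (Or.inr (hfB' (ha.resolve_left haA)))⟩
  · have htag : (∅ : ZFSet) ≠ {∅} := fun h =>
      (ZFSet.eq_empty _).1 h.symm ∅ (ZFSet.mem_singleton.2 rfl)
    intro a ha a' ha' h
    simp only at h
    split_ifs at h with haA ha'A ha'A
    · exact hf haA ha'A (ZFSet.pair_inj.1 h).2
    · exact absurd (ZFSet.pair_inj.1 h).1 htag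
    · exact absurd (ZFSet.pair_inj.1 h).1 htag.symm
    · exact hf' (ha.resolve_left haA) (ha'.resolve_left ha'A) (ZFSet.pair_inj.1 h).2

lemma smallSet_singleton (hU : IsUniverse U) {B : ZFSet} (hB : B ∈ U) (x : X) :
    SmallSet U {x} :=
  smallSet_of_injOn hU (f := fun _ => B) (hU.singleton_mem hB)
    (fun _ _ => ZFSet.mem_singleton.2 rfl) (Set.injOn_singleton _ _)

section CountingSystem

variable {s : X → X} {L : ∀ I ∈ LDom U s, X}

lemma SuccClosed.union {I J : Set X} (hI : SuccClosed s I) (hJ : SuccClosed s J) :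
    SuccClosed s (I ∪ J) := by
  rintro x (hx | hx)
  exacts [Or.inl (hI x hx), Or.inr (hJ x hx)]

lemma cl_union_eq_of_subset_cl {A J : Set X} (hA : A ⊆ cl U s L J) :
    cl U s L (A ∪ J) = cl U s L J := by
  ext x
  exact ⟨fun hx K hK hJK => hx K hK (Set.union_subset (fun a ha => hA ha K hK hJK) hJK),
    fun hx K hK hAJK => hx K hK (Set.subset_union_right.trans hAJK)⟩

lemma subset_cl_of_limit_mem {I J : Set X} (hI : I ∈ LDom U s) (h : L I hI ∈ J) :
    I ⊆ cl U s L J :=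
  fun _ hx _ hK hJK => hK.2 I hI (hJK h) hx

lemma mem_cl_of_succ_mem {x : X} {J : Set X} (h : s x ∈ J) : x ∈ cl U s L J :=
  fun _ hK hJK => hK.1 x (hJK h)

lemma leL_of_subset_cl (hU : IsUniverse U) (hC2 : C2 U s L) {A J : Set X}
    (hJ : J ∈ LDom U s) (hA : SmallSet U A) (hAJ : SuccClosed s (A ∪ J))
    (hAcl : A ⊆ cl U s L J) {x : X} (hx : x ∈ A) : leL U s L x (L J hJ) :=
  ⟨A ∪ J, ⟨hAJ, hA.union hU hJ.2⟩, Or.inl hx, hC2 _ _ _ _ (cl_union_eq_of_subset_cl hAcl)⟩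

lemma leL_trans (hU : IsUniverse U) (hC2 : C2 U s L) {x y z : X}
    (hxy : leL U s L x y) (hyz : leL U s L y z) : leL U s L x z := by
  obtain ⟨I, hI, hxI, rfl⟩ := hxy
  obtain ⟨J, hJ, hyJ, rfl⟩ := hyz
  exact leL_of_subset_cl hU hC2 hJ hI.2 (hI.1.union hJ.1) (subset_cl_of_limit_mem hI hyJ) hxI

lemma leL_of_succ_leL (hU : IsUniverse U) (hC2 : C2 U s L) {x z : X}
    (h : leL U s L (s x) z) : leL U s L x z := by
  obtain ⟨J, hJ, hxJ, rfl⟩ := h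
  obtain ⟨B, hB, -⟩ := hJ.2
  have hsucc : SuccClosed s ({x} ∪ J) := by
    rintro a (rfl | ha)
    exacts [Or.inr hxJ, Or.inr (hJ.1 a ha)]
  exact leL_of_subset_cl hU hC2 hJ (smallSet_singleton hU hB x) hsucc
    (Set.singleton_subset_iff.2 (mem_cl_of_succ_mem hxJ)) rfl

lemma leL_of_leS_of_leL (hU : IsUniverse U) (hC2 : C2 U s L) {x y z : X}
    (hxy : leS s x y) (hyz : leL U s L y z) : leL U s L x z := by
  obtain ⟨m, rfl⟩ := hxy
  induction m generalizing x with
  | zero => exact hyz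
  | succ m ih =>
    rw [Function.iterate_succ_apply] at hyz
    exact leL_of_succ_leL hU hC2 (ih hyz)

end CountingSystem

end

theorem stmt_16 (U : ZFSet) (hU : IsUniverse U) {X : Type*}
    (s : X → X) (L : ∀ I ∈ LDom U s, X) (hC2 : C2 U s L) :
    (∀ x y z : X, leL U s L x y → leL U s L y z → leL U s L x z) ∧
    (∀ x y z : X, leS s x y → leL U s L y z → leL U s L x z) :=
  ⟨fun _ _ _ => leL_trans hU hC2, fun _ _ _ => leL_of_leS_of_leL hU hC2⟩

end Paper
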